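/- Let g be the Minkowski bilinear form on ℝ^m (m ≥ 2). A nonzero vector v ∈ ℝ^m is causal past-directed (i.e. g(v,v) ≤ 0 and v₀ < 0) if and only if g(u,v) ≥ 0 for every future-directed lightlike vector u. -/
import Mathlib


/-- The Minkowski bilinear form on `ℝ^m`: `g(u,v) = -u₀v₀ + Σ_{k≥1} u_k v_k`. -/
noncomputable def mink (m : ℕ) (u v : Fin m → ℝ) : ℝ :=
  ∑ i : Fin m, (if i.val = 0 then -(u i * v i) else u i * v i)

lemma mink_expand (m : ℕ) (h0 : 0 < m) (u v : Fin m → ℝ) :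
    mink m u v = -(u ⟨0, h0⟩ * v ⟨0, h0⟩) +
      ∑ i ∈ Finset.univ.erase ⟨0, h0⟩, u i * v i := by
  have h1 := (Finset.add_sum_erase Finset.univ
    (fun i : Fin m => if i.val = 0 then -(u i * v i) else u i * v i)
    (Finset.mem_univ (⟨0, h0⟩ : Fin m))).symm
  have h2 : ∑ i ∈ Finset.univ.erase (⟨0, h0⟩ : Fin m),
      (if i.val = 0 then -(u i * v i) else u i * v i) =
      ∑ i ∈ Finset.univ.erase (⟨0, h0⟩ : Fin m), u i * v i := by
    apply Finset.sum_congr rfl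
    intro i hi
    have : i.val ≠ 0 := fun h => (Finset.mem_erase.mp hi).1 (Fin.ext h)
    simp [this]
  unfold mink
  rw [h1, h2]
  simp

/-- A nonzero vector `v` is causal past-directed iff `g(u,v) ≥ 0` for every
future-directed lightlike vector `u`. -/
theorem stmt1 (m : ℕ) (hm : 2 ≤ m) (v : Fin m → ℝ) (hv : v ≠ 0) :
    (mink m v v ≤ 0 ∧ v ⟨0, by omega⟩ < 0) ↔
      (∀ u : Fin m → ℝ, u ≠ 0 → mink m u u = 0 → 0 < u ⟨0, by omega⟩ →
        0 ≤ mink m u v) := by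
  have h0 : (0:ℕ) < m := by omega
  set z : Fin m := ⟨0, h0⟩ with hz
  set e : Finset (Fin m) := Finset.univ.erase z with he
  constructor
  · rintro ⟨hvv, hv0⟩ u hu huu hu0
    rw [mink_expand m h0] at hvv huu ⊢
    have hu0' : 0 < u z := hu0
    have hv0' : v z < 0 := hv0
    have hcs : (∑ i ∈ e, u i * v i) ^ 2 ≤
        (∑ i ∈ e, u i ^ 2) * (∑ i ∈ e, v i ^ 2) :=
      Finset.sum_mul_sq_le_sq_mul_sq e u v
    have h1 : ∑ i ∈ e, u i ^ 2 = ∑ i ∈ e, u i * u i := by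
      apply Finset.sum_congr rfl; intro i _; ring
    have h2 : ∑ i ∈ e, v i ^ 2 = ∑ i ∈ e, v i * v i := by
      apply Finset.sum_congr rfl; intro i _; ring
    rw [h1, h2] at hcs
    have hC : 0 ≤ ∑ i ∈ e, v i * v i :=
      Finset.sum_nonneg fun i _ => mul_self_nonneg _
    nlinarith [sq_nonneg (∑ i ∈ e, u i * v i - u z * v z),
      sq_nonneg (∑ i ∈ e, u i * v i + u z * v z),
      mul_pos hu0' (neg_pos.mpr hv0')]
  · intro H
    rw [mink_expand m h0]
    by_cases hsp : ∀ i ∈ e, v i = 0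
    · -- spatial part zero
      have hv0ne : v z ≠ 0 := by
        intro h
        apply hv; funext i
        by_cases hi : i = z
        · rw [hi, h]; rfl
        · have := hsp i (Finset.mem_erase.mpr ⟨hi, Finset.mem_univ i⟩)
          rw [this]; rfl
      have h1m : (1:ℕ) < m := by omega
      set u : Fin m → ℝ := fun i => if i.val = 0 then 1 else if i.val = 1 then 1 else 0
        with hu
      have hune : u ≠ 0 := by
        intro h
        have := congrFun h z
        simp [hu, hz] at this
      have huu : mink m u u = 0 := by
        rw [mink_expand m h0]
        have : ∑ i ∈ e, u i * u i = 1 := by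
          rw [Finset.sum_eq_single (⟨1, h1m⟩ : Fin m)]
          · simp [hu]
          · intro i hi hne
            have hi0 : i.val ≠ 0 := fun h => (Finset.mem_erase.mp hi).1 (Fin.ext h)
            have hi1 : i.val ≠ 1 := fun h => hne (Fin.ext h)
            simp [hu, hi0, hi1]
          · intro h
            exact absurd (Finset.mem_erase.mpr ⟨by simp [hz, Fin.ext_iff], Finset.mem_univ _⟩) h
        rw [this]
        simp [hu, hz]
      have hu0 : (0:ℝ) < u z := by simp [hu, hz]
      have key := H u hune huu hu0
      rw [mink_expand m h0] at key
      have hs : ∑ i ∈ e, u i * v i = 0 := by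
        apply Finset.sum_eq_zero
        intro i hi
        rw [hsp i hi, mul_zero]
      rw [hs] at key
      have huz : u z = 1 := by simp [hu, hz]
      rw [huz] at key
      have hvz : v z < 0 := by
        rcases lt_or_eq_of_le (by linarith : v z ≤ 0) with h | h
        · exact h
        · exact absurd h hv0ne
      constructor
      · have : ∑ i ∈ e, v i * v i = 0 :=
          Finset.sum_eq_zero fun i hi => by rw [hsp i hi, mul_zero]
        rw [this]
        nlinarith
      · exact hvz
    · -- nonzero spatial part
      push_neg at hsp
      obtain ⟨j, hj, hvj⟩ := hsp
      set C : ℝ := ∑ i ∈ e, v i * v i with hC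
      have hCpos : 0 < C := by
        have h1 : 0 < v j * v j := mul_self_pos.mpr hvj
        have h2 : v j * v j ≤ C :=
          Finset.single_le_sum (fun i _ => mul_self_nonneg (v i)) hj
        linarith
      set s : ℝ := Real.sqrt C with hs
      have hspos : 0 < s := Real.sqrt_pos.mpr hCpos
      have hss : s * s = C := Real.mul_self_sqrt hCpos.le
      set u : Fin m → ℝ := fun i => if i.val = 0 then s else -(v i) with hu
      have hune : u ≠ 0 := by
        intro h
        have := congrFun h z
        simp [hu, hz] at this
        linarith
      have husum : ∀ (w : Fin m → ℝ), ∑ i ∈ e, u i * w i = ∑ i ∈ e, -(v i) * w i := by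
        intro w
        apply Finset.sum_congr rfl
        intro i hi
        have : i.val ≠ 0 := fun h => (Finset.mem_erase.mp hi).1 (Fin.ext h)
        simp [hu, this]
      have huu : mink m u u = 0 := by
        rw [mink_expand m h0, husum u]
        have : ∑ i ∈ e, -(v i) * u i = C := by
          rw [hC]
          apply Finset.sum_congr rfl
          intro i hi
          have : i.val ≠ 0 := fun h => (Finset.mem_erase.mp hi).1 (Fin.ext h)
          simp [hu, this]
        rw [this]
        have : u z = s := by simp [hu, hz]
        rw [this]
        linarith
      have hu0 : (0:ℝ) < u z := by simpa [hu, hz] using hspos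
      have key := H u hune huu hu0
      rw [mink_expand m h0, husum v] at key
      have hsum : ∑ i ∈ e, -(v i) * v i = -C := by
        rw [hC, ← Finset.sum_neg_distrib]
        apply Finset.sum_congr rfl
        intro i _
        ring
      rw [hsum] at key
      have huz : u z = s := by simp [hu, hz]
      rw [huz] at key
      -- key : 0 ≤ -(s * v z) + -C
      have hvz : v z ≤ -s := by nlinarith
      constructor
      · nlinarith
      · linarith
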